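/- Let W be a module and a, b fixed submodules. On the set C_{ab} of common complements of a and b, the ternary operation (x y z) := M_{xabz}(y), where M_{xabz} = P^a_x - P^z_b applied to the submodule y (image of y under this linear map), satisfies the torsor identities: (x y y) = x, (y y x) = x, and (x y (z u v)) = ((x y z) u v) for all x, y, z, u, v ∈ C_{ab}. -/

import Mathlib

/-!
Write `P^a_x` for the projection onto `x` along `a`, so that `M_{xabz} = P^a_x - P^z_b`.
If `x` and `y` both complement `a`, then `P^a_x ∘ P^a_y = P^a_x`, so `P^a_x` maps `y` onto `x`.
Since `P^z_b = 1 - P^b_z`, we have `M_{xabz} = M_{zbax}` and `M_{xabz} ≡ P^b_z` modulo `a`; as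
`P^b_z ∘ P^b_y` is the identity on `z`, the projection onto `(xyz)` along `a` is
`M_{xabz} ∘ P^b_y ∘ P^a_z`. On `y`, `M_{xaby}` is `P^a_x` and `M_{yabx} = M_{xbay}` is `P^b_x`,
which gives the two unit laws. For para-associativity, both `M_{x a b (zuv)}` and
`M_{(xyz) a b v} ∘ P^a_u ∘ P^b_z` agree on `y`, and `P^a_u ∘ P^b_z` maps `y` onto `u`.
-/

-- P^a_x, defined to be 0 when x and a are not complementary.
open Classical in
noncomputable def projEnd {R W : Type*} [Ring R] [AddCommGroup W] [Module R W]
    (x a : Submodule R W) : Module.End R W :=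
  if h : IsCompl x a then x.subtype ∘ₗ x.linearProjOfIsCompl a h else 0

/-- The ternary product `(xyz) = M_{xabz}(y)` where `M_{xabz} = P^a_x - P^z_b`,
i.e. the image of the submodule `y` under the endomorphism `P^a_x - P^z_b`. -/
noncomputable def ternary {R W : Type*} [Ring R] [AddCommGroup W] [Module R W]
    (a b x y z : Submodule R W) : Submodule R W :=
  Submodule.map (projEnd x a - projEnd b z) y

open Submodule

theorem Submodule.map_eq_map_of_eqOn {S M N : Type*} [Semiring S] [AddCommMonoid M]
    [AddCommMonoid N] [Module S M] [Module S N] {f g : M →ₗ[S] N} {p : Submodule S M}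
    (h : Set.EqOn f g p) : p.map f = p.map g :=
  SetLike.coe_injective <| by simp only [map_coe]; exact h.image_eq

section

variable {R W : Type*} [Ring R] [AddCommGroup W] [Module R W] {a b x y z u v : Submodule R W}

theorem projEnd_of_isCompl (h : IsCompl x a) : projEnd x a = x.projection a h := by
  rw [projEnd, dif_pos h]
  rfl

theorem projEnd_apply_mem (h : IsCompl x a) (w : W) : projEnd x a w ∈ x := by
  rw [projEnd_of_isCompl h]
  exact projection_apply_mem h w

theorem projEnd_apply_of_mem_left (h : IsCompl x a) {w : W} (hw : w ∈ x) :
    projEnd x a w = w := by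
  rw [projEnd_of_isCompl h, projection_apply_of_mem_left h hw]

theorem projEnd_apply_eq_zero_iff (h : IsCompl x a) {w : W} : projEnd x a w = 0 ↔ w ∈ a := by
  rw [projEnd_of_isCompl h, projection_apply_eq_zero_iff]

theorem projEnd_apply_of_mem_right (h : IsCompl x a) {w : W} (hw : w ∈ a) :
    projEnd x a w = 0 :=
  (projEnd_apply_eq_zero_iff h).2 hw

theorem projEnd_eq_self_sub_projEnd (h : IsCompl x a) (w : W) : projEnd a x w = w - projEnd x a w := by
  rw [projEnd_of_isCompl h, projEnd_of_isCompl h.symm, projection_eq_self_sub_projection]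

theorem sub_projEnd_apply_mem (h : IsCompl x a) (w : W) : w - projEnd x a w ∈ a :=
  projEnd_eq_self_sub_projEnd h w ▸ projEnd_apply_mem h.symm w

theorem projEnd_apply_eq_of_sub_mem (h : IsCompl x a) {w s : W} (hs : s ∈ x) (hws : w - s ∈ a) :
    projEnd x a w = s := by
  rw [← sub_add_cancel w s, map_add, projEnd_apply_of_mem_right h hws,
    projEnd_apply_of_mem_left h hs, zero_add]

theorem projEnd_projEnd (hx : IsCompl x a) (hy : IsCompl y a) (w : W) :
    projEnd x a (projEnd y a w) = projEnd x a w := by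
  conv_rhs => rw [← add_sub_cancel (projEnd y a w) w]
  rw [map_add, projEnd_apply_of_mem_right hx (sub_projEnd_apply_mem hy w), add_zero]

theorem map_projEnd (hx : IsCompl x a) (hy : IsCompl y a) : y.map (projEnd x a) = x := by
  refine le_antisymm (map_le_iff_le_comap.2 fun w _ ↦ projEnd_apply_mem hx w) fun ξ hξ ↦ ?_
  refine ⟨projEnd y a ξ, projEnd_apply_mem hy ξ, ?_⟩
  rw [projEnd_projEnd hx hy, projEnd_apply_of_mem_left hx hξ]

/-- The endomorphism `M_{xabz}`. -/
noncomputable def ternaryEnd (a b x z : Submodule R W) : Module.End R W :=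
  projEnd x a - projEnd b z

theorem ternary_eq_map : ternary a b x y z = y.map (ternaryEnd a b x z) := rfl

theorem ternaryEnd_comm (hx : IsCompl x a) (hz : IsCompl z b) :
    ternaryEnd b a z x = ternaryEnd a b x z := by
  ext w
  simp only [ternaryEnd, LinearMap.sub_apply, projEnd_eq_self_sub_projEnd hx, projEnd_eq_self_sub_projEnd hz]
  abel

theorem ternary_comm (hx : IsCompl x a) (hz : IsCompl z b) :
    ternary b a z y x = ternary a b x y z := by
  rw [ternary_eq_map, ternary_eq_map, ternaryEnd_comm hx hz]

theorem ternaryEnd_apply_sub_projEnd_mem (hx : IsCompl x a) (hz : IsCompl z b) (w : W) :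
    ternaryEnd a b x z w - projEnd z b w ∈ a := by
  have h : ternaryEnd a b x z w - projEnd z b w = -(w - projEnd x a w) := by
    simp only [ternaryEnd, LinearMap.sub_apply, projEnd_eq_self_sub_projEnd hz]
    abel
  exact h ▸ a.neg_mem (sub_projEnd_apply_mem hx w)

theorem sub_ternaryEnd_projEnd_projEnd_mem (hxa : IsCompl x a) (hyb : IsCompl y b)
    (hza : IsCompl z a) (hzb : IsCompl z b) (w : W) :
    w - ternaryEnd a b x z (projEnd y b (projEnd z a w)) ∈ a := by
  set w' := projEnd y b (projEnd z a w)
  have hzw' : projEnd z b w' = projEnd z a w := by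
    rw [projEnd_projEnd hzb hyb, projEnd_apply_of_mem_left hzb (projEnd_apply_mem hza w)]
  have h : w - ternaryEnd a b x z w' =
      (w - projEnd z a w) - (ternaryEnd a b x z w' - projEnd z b w') := by
    rw [hzw']
    abel
  exact h ▸ a.sub_mem (sub_projEnd_apply_mem hza w) (ternaryEnd_apply_sub_projEnd_mem hxa hzb w')

theorem isCompl_ternary (hxa : IsCompl x a) (hyb : IsCompl y b) (hza : IsCompl z a)
    (hzb : IsCompl z b) : IsCompl (ternary a b x y z) a := by
  constructor
  · rw [ternary_eq_map, disjoint_def]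
    rintro _ ⟨w, hwy, rfl⟩ hwa
    have hzw : projEnd z b w = 0 :=
      disjoint_def.1 hza.disjoint _ (projEnd_apply_mem hzb w) <|
        sub_sub_cancel (ternaryEnd a b x z w) (projEnd z b w) ▸
          a.sub_mem hwa (ternaryEnd_apply_sub_projEnd_mem hxa hzb w)
    rw [disjoint_def.1 hyb.disjoint w hwy ((projEnd_apply_eq_zero_iff hzb).1 hzw), map_zero]
  · refine codisjoint_iff_exists_add_eq.2 fun w ↦ ⟨_, _, ⟨_, projEnd_apply_mem hyb _, rfl⟩,
      sub_ternaryEnd_projEnd_projEnd_mem hxa hyb hza hzb w, add_sub_cancel _ _⟩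

theorem projEnd_ternary_apply (hxa : IsCompl x a) (hyb : IsCompl y b) (hza : IsCompl z a)
    (hzb : IsCompl z b) (w : W) :
    projEnd (ternary a b x y z) a w = ternaryEnd a b x z (projEnd y b (projEnd z a w)) :=
  projEnd_apply_eq_of_sub_mem (isCompl_ternary hxa hyb hza hzb)
    ⟨_, projEnd_apply_mem hyb _, rfl⟩ (sub_ternaryEnd_projEnd_projEnd_mem hxa hyb hza hzb w)

theorem ternary_self_right (hxa : IsCompl x a) (hya : IsCompl y a) (hyb : IsCompl y b) :
    ternary a b x y y = x := by
  refine (map_eq_map_of_eqOn fun w hw ↦ ?_).trans (map_projEnd hxa hya)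
  simp only [LinearMap.sub_apply, projEnd_apply_of_mem_right hyb.symm hw, sub_zero]

theorem ternary_self_left (hxb : IsCompl x b) (hya : IsCompl y a) (hyb : IsCompl y b) :
    ternary a b y y x = x := by
  rw [← ternary_comm hya hxb]
  exact ternary_self_right hxb hyb hya

theorem ternaryEnd_ternary_apply (hxa : IsCompl x a) (hyb : IsCompl y b) (hza : IsCompl z a)
    (hzb : IsCompl z b) (hua : IsCompl u a) (hvb : IsCompl v b) {w : W} (hw : w ∈ y) :
    ternaryEnd a b x (ternary a b z u v) w =
      ternaryEnd a b (ternary a b x y z) v (projEnd u a (projEnd z b w)) := by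
  set ω := projEnd u a (projEnd z b w)
  have hzω : projEnd z a ω = projEnd z b w := by
    rw [projEnd_projEnd hza hua, projEnd_apply_of_mem_left hza (projEnd_apply_mem hzb w)]
  have hyw : projEnd y b (projEnd z b w) = w := by
    rw [projEnd_projEnd hyb hzb, projEnd_apply_of_mem_left hyb hw]
  have htb : IsCompl (ternary a b z u v) b :=
    ternary_comm hza hvb ▸ isCompl_ternary hvb hua hzb hza
  have ht : projEnd (ternary a b z u v) b w = ternaryEnd a b z v ω := by
    rw [← ternary_comm hza hvb, projEnd_ternary_apply hvb hua hzb hza, ternaryEnd_comm hza hvb]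
  have hs : projEnd (ternary a b x y z) a ω = ternaryEnd a b x z w := by
    rw [projEnd_ternary_apply hxa hyb hza hzb, hzω, hyw]
  rw [← ternaryEnd_comm hxa htb]
  simp only [ternaryEnd, LinearMap.sub_apply] at ht hs ⊢
  rw [ht, hs, hzω, projEnd_eq_self_sub_projEnd hxa, projEnd_eq_self_sub_projEnd hzb]
  abel

theorem ternary_ternary (hxa : IsCompl x a) (hyb : IsCompl y b)
    (hza : IsCompl z a) (hzb : IsCompl z b) (hua : IsCompl u a) (hvb : IsCompl v b) :
    ternary a b x y (ternary a b z u v) = ternary a b (ternary a b x y z) u v := by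
  calc ternary a b x y (ternary a b z u v)
      = y.map (ternaryEnd a b (ternary a b x y z) v ∘ₗ projEnd u a ∘ₗ projEnd z b) :=
        map_eq_map_of_eqOn fun w hw ↦ ternaryEnd_ternary_apply hxa hyb hza hzb hua hvb hw
    _ = ternary a b (ternary a b x y z) u v := by
        rw [map_comp, map_comp, map_projEnd hzb hyb, map_projEnd hua hza]
        rfl

end

/-- on the set `C_{ab}` of common complements of `a` and `b`, the
ternary operation `(xyz) := M_{xabz}(y)` satisfies the torsor identities
`(xyy) = x`, `(yyx) = x` and `(xy(zuv)) = ((xyz)uv)`. -/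
theorem stmt2 {R W : Type*} [Ring R] [AddCommGroup W] [Module R W]
    (a b x y z u v : Submodule R W)
    (hx : IsCompl x a ∧ IsCompl x b) (hy : IsCompl y a ∧ IsCompl y b)
    (hz : IsCompl z a ∧ IsCompl z b) (hu : IsCompl u a ∧ IsCompl u b)
    (hv : IsCompl v a ∧ IsCompl v b) :
    ternary a b x y y = x ∧
    ternary a b y y x = x ∧
    ternary a b x y (ternary a b z u v) = ternary a b (ternary a b x y z) u v :=
  ⟨ternary_self_right hx.1 hy.1 hy.2, ternary_self_left hx.2 hy.1 hy.2,
    ternary_ternary hx.1 hy.2 hz.1 hz.2 hu.1 hv.2⟩
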